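/- Fix κ ≥ 0 and α > 0, and assume that B is strictly decreasing on [0,1). Define f(r) = A(r) - α·B(P(r)) for r ≥ 0. Then f is strictly increasing on (0,∞), f(0) = -α·E(κ)² < 0, and consequently the system q = P(r), r = (α/(1-q)²)·B(q) admits at most one solution (q, r) ∈ [0,1) × [0,∞). -/

import Mathlib

open MeasureTheory Real Filter

/-- The standard normal density. -/
noncomputable def gphi (u : ℝ) : ℝ := Real.exp (-u ^ 2 / 2) / Real.sqrt (2 * Real.pi)

/-- The standard normal CDF. -/
noncomputable def gPhi (u : ℝ) : ℝ := ∫ s in Set.Iic u, gphi s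

/-- The standard normal tail. -/
noncomputable def gPhiBar (u : ℝ) : ℝ := 1 - gPhi u

/-- The inverse Mills ratio. -/
noncomputable def mills (u : ℝ) : ℝ := gphi u / gPhiBar u

/-- P(r) = E[tanh²(√r Z)]. -/
noncomputable def Pfun (r : ℝ) : ℝ := ∫ z : ℝ, Real.tanh (Real.sqrt r * z) ^ 2 * gphi z

/-- B(q). -/
noncomputable def Bfun (κ q : ℝ) : ℝ :=
  (1 - q) * ∫ z : ℝ, mills ((κ - Real.sqrt q * z) / Real.sqrt (1 - q)) ^ 2 * gphi z

/-- C_κ. -/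
noncomputable def Ckappa (κ : ℝ) : ℝ := ∫ z : ℝ, max (κ - z) 0 ^ 2 * gphi z

/-- The critical capacity. -/
noncomputable def alphac (κ : ℝ) : ℝ := 2 / (Real.pi * Ckappa κ)

/-- A(r) = r (1 - P(r))². -/
noncomputable def Afun (r : ℝ) : ℝ := r * (1 - Pfun r) ^ 2

/-!
Gaussian integration by parts gives `h(r) := E[Z tanh(√r Z)] = √r (1 - P(r))`, so
`A(r) = h(r)²`. Since `s ↦ z tanh(s z)` is nondecreasing for every `z`, and strictly increasing
for `z ≠ 0`, `h` is strictly increasing from `h(0) = 0`, hence so is `A` on `[0, ∞)`. Likewise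
`P` is nondecreasing with values in `[0, 1)`, so `B ∘ P` is nonincreasing and `f = A - α B ∘ P`
is strictly increasing on `[0, ∞)`. Every solution `(q, r)` of the system is a zero of `f`,
which therefore determines `r`, and then `q = P(r)`.
-/

open Set

theorem hasDerivAt_tanh (x : ℝ) : HasDerivAt tanh (1 - tanh x ^ 2) x := by
  have h := (hasDerivAt_sinh x).div (hasDerivAt_cosh x) (cosh_pos x).ne'
  rw [show sinh / cosh = tanh from funext fun y => (tanh_eq_sinh_div_cosh y).symm] at h
  exact h.congr_deriv (by rw [tanh_eq_sinh_div_cosh]; field_simp)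

@[fun_prop]
theorem continuous_tanh : Continuous tanh :=
  continuous_iff_continuousAt.2 fun x => (hasDerivAt_tanh x).continuousAt

theorem strictMono_tanh : StrictMono tanh :=
  strictMono_of_hasDerivAt_pos hasDerivAt_tanh fun x => sub_pos.2 (tanh_sq_lt_one x)

theorem tanh_nonneg {x : ℝ} (hx : 0 ≤ x) : 0 ≤ tanh x :=
  tanh_zero ▸ strictMono_tanh.monotone hx

theorem tanh_mul_sq_eq_tanh_mul_abs_sq (s z : ℝ) : tanh (s * z) ^ 2 = tanh (s * |z|) ^ 2 := by
  rcases abs_choice z with h | h <;> simp [h, tanh_neg]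

theorem mul_tanh_mul_eq_abs_mul_tanh_mul_abs (s z : ℝ) :
    z * tanh (s * z) = |z| * tanh (s * |z|) := by
  rcases abs_choice z with h | h <;> simp [h, tanh_neg]

theorem tanh_mul_sq_le_tanh_mul_sq {s₁ s₂ : ℝ} (hs₁ : 0 ≤ s₁) (h : s₁ ≤ s₂) (z : ℝ) :
    tanh (s₁ * z) ^ 2 ≤ tanh (s₂ * z) ^ 2 := by
  rw [tanh_mul_sq_eq_tanh_mul_abs_sq s₁, tanh_mul_sq_eq_tanh_mul_abs_sq s₂]
  exact pow_le_pow_left₀ (tanh_nonneg (mul_nonneg hs₁ (abs_nonneg z)))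
    (strictMono_tanh.monotone (mul_le_mul_of_nonneg_right h (abs_nonneg z))) 2

theorem mul_tanh_mul_le_mul_tanh_mul {s₁ s₂ : ℝ} (h : s₁ ≤ s₂) (z : ℝ) :
    z * tanh (s₁ * z) ≤ z * tanh (s₂ * z) := by
  rw [mul_tanh_mul_eq_abs_mul_tanh_mul_abs s₁, mul_tanh_mul_eq_abs_mul_tanh_mul_abs s₂]
  exact mul_le_mul_of_nonneg_left
    (strictMono_tanh.monotone (mul_le_mul_of_nonneg_right h (abs_nonneg z))) (abs_nonneg z)

theorem gphi_eq_gaussianPDFReal : gphi = ProbabilityTheory.gaussianPDFReal 0 1 := by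
  ext u
  simp [gphi, ProbabilityTheory.gaussianPDFReal, div_eq_inv_mul]

theorem gphi_pos (u : ℝ) : 0 < gphi u := by
  rw [gphi_eq_gaussianPDFReal]
  exact ProbabilityTheory.gaussianPDFReal_pos _ _ _ one_ne_zero

@[fun_prop]
theorem continuous_gphi : Continuous gphi := by
  unfold gphi
  fun_prop

theorem integrable_gphi : Integrable gphi :=
  gphi_eq_gaussianPDFReal ▸ ProbabilityTheory.integrable_gaussianPDFReal 0 1

theorem integral_gphi : ∫ z, gphi z = 1 :=
  gphi_eq_gaussianPDFReal ▸ ProbabilityTheory.integral_gaussianPDFReal_eq_one 0 one_ne_zero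

theorem integrable_mul_gphi : Integrable fun z => z * gphi z := by
  refine ((integrable_mul_exp_neg_mul_sq (b := 1 / 2) (by norm_num)).div_const
    √(2 * π)).congr (ae_of_all _ fun z => ?_)
  dsimp only [gphi]
  ring_nf

theorem hasDerivAt_gphi (z : ℝ) : HasDerivAt gphi (-z * gphi z) z := by
  have h := ((((hasDerivAt_pow 2 z).neg).div_const 2).exp).div_const √(2 * π)
  exact h.congr_deriv (by simp only [gphi, Pi.neg_apply]; push_cast; ring)

theorem integrable_mul_gphi_of_abs_le {g : ℝ → ℝ} {C : ℝ} (hg : Continuous g)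
    (hC : ∀ z, |g z| ≤ C) : Integrable fun z => g z * gphi z :=
  integrable_gphi.bdd_mul hg.aestronglyMeasurable (ae_of_all _ hC)

theorem integrable_mul_mul_gphi_of_abs_le {g : ℝ → ℝ} {C : ℝ} (hg : Continuous g)
    (hC : ∀ z, |g z| ≤ C) : Integrable fun z => z * g z * gphi z :=
  (integrable_mul_gphi.bdd_mul hg.aestronglyMeasurable (ae_of_all _ hC)).congr
    (ae_of_all _ fun z => by ring)

theorem integral_mul_mul_gphi_eq_integral_deriv_mul_gphi {g g' : ℝ → ℝ} {C : ℝ}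
    (hg : ∀ z, HasDerivAt g (g' z) z) (hC : ∀ z, |g z| ≤ C)
    (hg' : Integrable fun z => g' z * gphi z) :
    ∫ z, z * g z * gphi z = ∫ z, g' z * gphi z := by
  have hg_cont : Continuous g := continuous_iff_continuousAt.2 fun z => (hg z).continuousAt
  have hzg := integrable_mul_mul_gphi_of_abs_le hg_cont hC
  have hderiv : ∀ z, HasDerivAt (fun z => g z * gphi z) (g' z * gphi z - z * g z * gphi z) z :=
    fun z => ((hg z).mul (hasDerivAt_gphi z)).congr_deriv (by ring)
  have h := integral_eq_zero_of_hasDerivAt_of_integrable hderiv (hg'.sub hzg)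
    (integrable_mul_gphi_of_abs_le hg_cont hC)
  rw [integral_sub hg' hzg, sub_eq_zero] at h
  exact h.symm

theorem gPhiBar_pos (u : ℝ) : 0 < gPhiBar u := by
  have hsplit := intervalIntegral.integral_Iic_add_Ioi (b := u) integrable_gphi.integrableOn
    integrable_gphi.integrableOn
  have htail : 0 < ∫ s in Ioi u, gphi s := by
    rw [setIntegral_pos_iff_support_of_nonneg_ae (ae_of_all _ fun s => (gphi_pos s).le)
      integrable_gphi.integrableOn, Function.support_eq_univ fun s => (gphi_pos s).ne',
      univ_inter, volume_Ioi]
    exact ENNReal.zero_lt_top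
  rw [integral_gphi] at hsplit
  rw [gPhiBar, gPhi]
  linarith

theorem mills_pos (u : ℝ) : 0 < mills u :=
  div_pos (gphi_pos u) (gPhiBar_pos u)

theorem Bfun_zero (κ : ℝ) : Bfun κ 0 = mills κ ^ 2 := by
  simp [Bfun, integral_const_mul, integral_gphi]

theorem integrable_tanh_mul_sq_mul_gphi (s : ℝ) :
    Integrable fun z => tanh (s * z) ^ 2 * gphi z :=
  integrable_mul_gphi_of_abs_le (by fun_prop) fun z => by
    rw [abs_of_nonneg (sq_nonneg _)]
    exact (tanh_sq_lt_one _).le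

theorem integrable_one_sub_tanh_mul_sq_mul_gphi (s : ℝ) :
    Integrable fun z => (1 - tanh (s * z) ^ 2) * gphi z :=
  (integrable_gphi.sub (integrable_tanh_mul_sq_mul_gphi s)).congr
    (ae_of_all _ fun z => by simp only [Pi.sub_apply]; ring)

theorem integrable_mul_tanh_mul_mul_gphi (s : ℝ) :
    Integrable fun z => z * tanh (s * z) * gphi z :=
  integrable_mul_mul_gphi_of_abs_le (by fun_prop) fun _ => (abs_tanh_lt_one _).le

theorem one_sub_Pfun (r : ℝ) : 1 - Pfun r = ∫ z, (1 - tanh (√r * z) ^ 2) * gphi z := by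
  simp_rw [sub_mul, one_mul]
  rw [integral_sub integrable_gphi (integrable_tanh_mul_sq_mul_gphi _), integral_gphi, Pfun]

theorem Pfun_zero : Pfun 0 = 0 := by
  simp [Pfun]

theorem Pfun_nonneg (r : ℝ) : 0 ≤ Pfun r :=
  integral_nonneg fun z => mul_nonneg (sq_nonneg _) (gphi_pos z).le

theorem Pfun_lt_one (r : ℝ) : Pfun r < 1 := by
  have h : 0 < ∫ z, (1 - tanh (√r * z) ^ 2) * gphi z :=
    integral_pos_of_integrable_nonneg_nonzero (x := 0) (by fun_prop)
      (integrable_one_sub_tanh_mul_sq_mul_gphi _)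
      (fun z => mul_nonneg (sub_nonneg.2 (tanh_sq_lt_one _).le) (gphi_pos z).le)
      (by simp [(gphi_pos 0).ne'])
  linarith [one_sub_Pfun r]

theorem Pfun_mem_Ico (r : ℝ) : Pfun r ∈ Ico 0 1 :=
  ⟨Pfun_nonneg r, Pfun_lt_one r⟩

theorem monotone_Pfun : Monotone Pfun := fun _ _ h =>
  integral_mono (integrable_tanh_mul_sq_mul_gphi _) (integrable_tanh_mul_sq_mul_gphi _) fun z =>
    mul_le_mul_of_nonneg_right (tanh_mul_sq_le_tanh_mul_sq (sqrt_nonneg _) (sqrt_le_sqrt h) z)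
      (gphi_pos z).le

theorem strictMono_integral_mul_tanh_mul_mul_gphi :
    StrictMono fun s => ∫ z, z * tanh (s * z) * gphi z := by
  intro s₁ s₂ h
  have hpos : 0 < ∫ z, (z * tanh (s₂ * z) - z * tanh (s₁ * z)) * gphi z :=
    integral_pos_of_integrable_nonneg_nonzero (x := 1) (by fun_prop)
      (((integrable_mul_tanh_mul_mul_gphi s₂).sub (integrable_mul_tanh_mul_mul_gphi s₁)).congr
        (ae_of_all _ fun z => by simp only [Pi.sub_apply]; ring))
      (fun z => mul_nonneg (sub_nonneg.2 (mul_tanh_mul_le_mul_tanh_mul h.le z)) (gphi_pos z).le)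
      (by simpa [sub_eq_zero, (gphi_pos 1).ne'] using (strictMono_tanh h).ne')
  simp_rw [sub_mul] at hpos
  rw [integral_sub (integrable_mul_tanh_mul_mul_gphi s₂) (integrable_mul_tanh_mul_mul_gphi s₁),
    sub_pos] at hpos
  exact hpos

noncomputable def hfun (r : ℝ) : ℝ := ∫ z, z * tanh (√r * z) * gphi z

theorem hfun_eq (r : ℝ) : hfun r = √r * (1 - Pfun r) := by
  rw [hfun, one_sub_Pfun, ← integral_const_mul]
  refine (integral_mul_mul_gphi_eq_integral_deriv_mul_gphi (g := fun z => tanh (√r * z))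
    (g' := fun z => √r * (1 - tanh (√r * z) ^ 2))
    (C := 1) (fun z => ?_) (fun z => (abs_tanh_lt_one _).le)
    (((integrable_one_sub_tanh_mul_sq_mul_gphi _).const_mul √r).congr
      (ae_of_all _ fun z => by ring))).trans ?_
  · exact ((hasDerivAt_tanh _).comp z ((hasDerivAt_id' z).const_mul √r)).congr_deriv (by ring)
  · simp_rw [mul_assoc]

theorem hfun_zero : hfun 0 = 0 := by
  simp [hfun_eq]

theorem strictMonoOn_hfun : StrictMonoOn hfun (Ici 0) := fun _ h₁ _ _ h =>
  strictMono_integral_mul_tanh_mul_mul_gphi (sqrt_lt_sqrt h₁ h)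

theorem Afun_eq_hfun_sq {r : ℝ} (hr : 0 ≤ r) : Afun r = hfun r ^ 2 := by
  rw [hfun_eq, mul_pow, sq_sqrt hr, Afun]

theorem strictMonoOn_Afun : StrictMonoOn Afun (Ici 0) := by
  intro r₁ h₁ r₂ h₂ h
  have hh₁ : 0 ≤ hfun r₁ := hfun_zero ▸ strictMonoOn_hfun.monotoneOn self_mem_Ici h₁ h₁
  rw [Afun_eq_hfun_sq h₁, Afun_eq_hfun_sq h₂]
  exact pow_lt_pow_left₀ (strictMonoOn_hfun h₁ h₂ h) hh₁ two_ne_zero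

theorem strictMonoOn_Afun_sub_comp_Pfun {g : ℝ → ℝ} (hg : AntitoneOn g (Ico 0 1)) :
    StrictMonoOn (fun r => Afun r - g (Pfun r)) (Ici 0) := by
  intro r₁ h₁ r₂ h₂ h
  have hA := strictMonoOn_Afun h₁ h₂ h
  have hgP := hg (Pfun_mem_Ico r₁) (Pfun_mem_Ico r₂) (monotone_Pfun h.le)
  simp only
  linarith

theorem Afun_sub_eq_zero_of_fixedPoint {g : ℝ → ℝ} {α q r : ℝ} (hq : q < 1) (hqr : q = Pfun r)
    (hrq : r = α / (1 - q) ^ 2 * g q) : Afun r - α * g (Pfun r) = 0 := by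
  have hq' : (1 - q) ^ 2 ≠ 0 := pow_ne_zero 2 (sub_ne_zero.2 hq.ne')
  rw [Afun, ← hqr, hrq, div_mul_eq_mul_div, div_mul_cancel₀ _ hq', sub_self]

theorem stmt_9_general (κ : ℝ) (α : ℝ) (hα : 0 < α)
    (hB : StrictAntiOn (Bfun κ) (Set.Ico (0 : ℝ) 1)) :
    StrictMonoOn (fun r => Afun r - α * Bfun κ (Pfun r)) (Set.Ioi (0 : ℝ)) ∧
    Afun 0 - α * Bfun κ (Pfun 0) = -(α * mills κ ^ 2) ∧
    Afun 0 - α * Bfun κ (Pfun 0) < 0 ∧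
    (∀ p₁ p₂ : ℝ × ℝ,
      (p₁.1 ∈ Set.Ico (0 : ℝ) 1 ∧ 0 ≤ p₁.2 ∧ p₁.1 = Pfun p₁.2 ∧
        p₁.2 = α / (1 - p₁.1) ^ 2 * Bfun κ p₁.1) →
      (p₂.1 ∈ Set.Ico (0 : ℝ) 1 ∧ 0 ≤ p₂.2 ∧ p₂.1 = Pfun p₂.2 ∧
        p₂.2 = α / (1 - p₂.1) ^ 2 * Bfun κ p₂.1) →
      p₁ = p₂) := by
  have hf : StrictMonoOn (fun r => Afun r - α * Bfun κ (Pfun r)) (Ici 0) :=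
    strictMonoOn_Afun_sub_comp_Pfun fun _ hx _ hy hxy =>
      mul_le_mul_of_nonneg_left (hB.antitoneOn hx hy hxy) hα.le
  have hf0 : Afun 0 - α * Bfun κ (Pfun 0) = -(α * mills κ ^ 2) := by
    rw [Afun, Pfun_zero, Bfun_zero]
    ring
  refine ⟨hf.mono Ioi_subset_Ici_self, hf0,
    hf0 ▸ neg_neg_of_pos (mul_pos hα (pow_pos (mills_pos κ) 2)), ?_⟩
  intro p₁ p₂ ⟨hq₁, hr₁, hqr₁, hrq₁⟩ ⟨hq₂, hr₂, hqr₂, hrq₂⟩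
  have hr : p₁.2 = p₂.2 := hf.injOn hr₁ hr₂ <|
    (Afun_sub_eq_zero_of_fixedPoint hq₁.2 hqr₁ hrq₁).trans
      (Afun_sub_eq_zero_of_fixedPoint hq₂.2 hqr₂ hrq₂).symm
  exact Prod.ext (by rw [hqr₁, hqr₂, hr]) hr

theorem stmt_9 (κ : ℝ) (hκ : 0 ≤ κ) (α : ℝ) (hα : 0 < α)
    (hB : StrictAntiOn (Bfun κ) (Set.Ico (0 : ℝ) 1)) :
    StrictMonoOn (fun r => Afun r - α * Bfun κ (Pfun r)) (Set.Ioi (0 : ℝ)) ∧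
    Afun 0 - α * Bfun κ (Pfun 0) = -(α * mills κ ^ 2) ∧
    Afun 0 - α * Bfun κ (Pfun 0) < 0 ∧
    (∀ p₁ p₂ : ℝ × ℝ,
      (p₁.1 ∈ Set.Ico (0 : ℝ) 1 ∧ 0 ≤ p₁.2 ∧ p₁.1 = Pfun p₁.2 ∧
        p₁.2 = α / (1 - p₁.1) ^ 2 * Bfun κ p₁.1) →
      (p₂.1 ∈ Set.Ico (0 : ℝ) 1 ∧ 0 ≤ p₂.2 ∧ p₂.1 = Pfun p₂.2 ∧
        p₂.2 = α / (1 - p₂.1) ^ 2 * Bfun κ p₂.1) →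
      p₁ = p₂) :=
  stmt_9_general κ α hα hB
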